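/- Let β be a partition with at most one part equal to 1, all other parts even with multiplicity at most 2, and an even number of parts if no part equals 1. Let δ be the subpartition of parts on which f takes the value 0. Then δ contains no bad sequence, i.e., there is no even index i with δ_i = δ_{i+1} > δ_{i+2} = δ_{i+3}, δ_{i+1} − δ_{i+2} = 2, and δ_{i+2} ≠ 0. -/

import Mathlib

namespace Duckworth

/-- The recursive map `f` of Definition 1.4, computed along the list of parts.
`bk` is the value of the last part mapped to 1 (`none` if there is none yet),
`l` is the number of parts so far mapped to 1, `i` the number mapped to 0. -/
def fGo : Option ℕ → ℕ → ℕ → List ℕ → List Bool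
  | _, _, _, [] => []
  | bk, l, i, b :: rest =>
    let b1 := rest.getD 0 0
    let b3 := rest.getD 2 0
    let lEven := l % 2 == 0
    let iOdd := i % 2 == 1
    let c1 := lEven && decide (bk.getD (b + 3) ≤ b + 2)
    let c2 := lEven && iOdd && decide (b1 ≤ 1)
    let c3 := lEven && iOdd && decide (b1 ≤ b3 + 2) && decide (b3 ≠ 0) &&
      decide (b3 + 3 ≤ b)
    if c1 || c2 || c3 then
      false :: fGo bk l (i + 1) rest
    else
      true :: fGo (some b) (l + 1) i rest

/-- The list of `f`-values of the parts of `β` (in order). -/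
def fList (β : List ℕ) : List Bool := fGo none 0 0 β

/-- The sublist of parts of `β` whose `f`-value is `v`. -/
def selectBy (β : List ℕ) (v : Bool) : List ℕ :=
  ((β.zip (fList β)).filter (fun p => p.2 == v)).map Prod.fst

/-- `β⁽¹⁾`: the parts with `f`-value 1. -/
def beta1 (β : List ℕ) : List ℕ := selectBy β true

/-- `δ`: the parts with `f`-value 0. -/
def delta (β : List ℕ) : List ℕ := selectBy β false

/-- `β⁽²⁾`: the parts of `δ` with `f`-value 1. -/
def beta2 (β : List ℕ) : List ℕ := selectBy (delta β) true

/-- `β⁽³⁾`: the parts of `δ` with `f`-value 0. -/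
def beta3 (β : List ℕ) : List ℕ := selectBy (delta β) false

/-- A partition: a weakly decreasing list of positive integers. -/
def IsPartition (β : List ℕ) : Prop :=
  β.Pairwise (· ≥ ·) ∧ ∀ x ∈ β, 0 < x

/-- The `i`-th part (1-based); parts beyond the length are 0. -/
def part (β : List ℕ) (i : ℕ) : ℕ := β.getD (i - 1) 0

/-- The difference condition: for every even index `i` with `β_{i+1} ≥ 1`,
`β_i − β_{i+1} ≥ 3`. -/
def DiffCond (β : List ℕ) : Prop :=
  ∀ i, 0 < i → i % 2 = 0 → 1 ≤ part β (i + 1) → part β (i + 1) + 3 ≤ part β i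

/-- Hypotheses of Proposition 4.5: at most one part equal to 1, all other parts
even with multiplicity at most 2, and an even number of parts if no part is 1. -/
def GoodBeta (β : List ℕ) : Prop :=
  IsPartition β ∧ β.count 1 ≤ 1 ∧
  (∀ x ∈ β, x ≠ 1 → 2 ∣ x ∧ β.count x ≤ 2) ∧
  (1 ∉ β → 2 ∣ β.length)

/-- A bad sequence: an even index `i` with
`β_i = β_{i+1} > β_{i+2} = β_{i+3}`, `β_{i+1} − β_{i+2} = 2`, `β_{i+2} ≠ 0`. -/
def BadSeq (β : List ℕ) : Prop :=
  ∃ i, 0 < i ∧ i % 2 = 0 ∧ part β i = part β (i + 1) ∧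
    part β (i + 1) = part β (i + 2) + 2 ∧
    part β (i + 2) = part β (i + 3) ∧ part β (i + 2) ≠ 0

/-- The dual (conjugate) partition: `λ*_i = #{j : λ_j ≥ i}`. -/
def dual (β : List ℕ) : List ℕ :=
  (List.range (β.foldr max 0)).map (fun i => β.countP (fun x => decide (i + 1 ≤ x)))

def fCond (bk : Option ℕ) (l i b : ℕ) (rest : List ℕ) : Bool :=
  let b1 := rest.getD 0 0
  let b3 := rest.getD 2 0
  let lEven := l % 2 == 0
  let iOdd := i % 2 == 1
  (lEven && decide (bk.getD (b + 3) ≤ b + 2)) ||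
  (lEven && iOdd && decide (b1 ≤ 1)) ||
  (lEven && iOdd && decide (b1 ≤ b3 + 2) && decide (b3 ≠ 0) && decide (b3 + 3 ≤ b))

lemma fGo_cons (bk l i b rest) : fGo bk l i (b :: rest) =
    if fCond bk l i b rest then false :: fGo bk l (i+1) rest
    else true :: fGo (some b) (l+1) i rest := rfl

def zs : Option ℕ → ℕ → ℕ → List ℕ → List ℕ
  | _, _, _, [] => []
  | bk, l, i, b :: rest =>
    if fCond bk l i b rest then b :: zs bk l (i+1) rest
    else zs (some b) (l+1) i rest

lemma fCond_elim {bk : Option ℕ} {l i b : ℕ} {rest : List ℕ}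
    (h : fCond bk l i b rest = true) :
    (∃ v, bk = some v ∧ v ≤ b + 2) ∨
    (i % 2 = 1 ∧ rest.getD 0 0 ≤ 1) ∨
    (i % 2 = 1 ∧ rest.getD 0 0 ≤ rest.getD 2 0 + 2 ∧ rest.getD 2 0 ≠ 0 ∧
      rest.getD 2 0 + 3 ≤ b) := by
  simp only [fCond, Bool.or_eq_true, Bool.and_eq_true, decide_eq_true_eq, beq_iff_eq] at h
  rcases h with (h | h) | h
  · cases bk with
    | none => simp [Option.getD] at h
    | some v => exact Or.inl ⟨v, rfl, h.2⟩
  · exact Or.inr (Or.inl ⟨h.1.2, h.2⟩)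
  · exact Or.inr (Or.inr ⟨h.1.1.1.2, h.1.1.2, h.1.2, h.2⟩)
lemma zs_cons (bk l i b rest) : zs bk l i (b :: rest) =
    if fCond bk l i b rest then b :: zs bk l (i+1) rest
    else zs (some b) (l+1) i rest := rfl

lemma zs_sublist (β : List ℕ) : ∀ bk l i, List.Sublist (zs bk l i β) β := by
  induction β with
  | nil => intro bk l i; simp [zs]
  | cons b rest ih =>
    intro bk l i
    rw [zs]
    split
    · exact (ih bk l (i+1)).cons₂ b
    · exact (ih (some b) (l+1) i).cons b

lemma zsel (β : List ℕ) : ∀ bk l i,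
    ((β.zip (fGo bk l i β)).filter (fun p => p.2 == false)).map Prod.fst
      = zs bk l i β := by
  induction β with
  | nil => intro bk l i; simp [fGo, zs]
  | cons b rest ih =>
    intro bk l i
    by_cases h : fCond bk l i b rest = true
    · rw [fGo_cons, if_pos h, zs_cons, if_pos h]
      simpa using ih bk l (i+1)
    · rw [fGo_cons, if_neg h, zs_cons, if_neg h]
      simpa using ih (some b) (l+1) i

lemma getD_mem {L : List ℕ} {n x : ℕ} (h : L.getD n 0 = x) (hx : x ≠ 0) : x ∈ L := by
  induction L generalizing n with
  | nil => simp [List.getD_nil] at h; exact absurd h.symm hx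
  | cons a t ih =>
    cases n with
    | zero => simp [List.getD_cons_zero] at h; exact h ▸ (List.mem_cons_self : a ∈ a :: t)
    | succ n => exact List.mem_cons_of_mem a (ih (by simpa using h))

lemma two_le_count {L : List ℕ} {e : ℕ} (h0 : L.getD 0 0 = e) (h1 : L.getD 1 0 = e)
    (he : e ≠ 0) : 2 ≤ L.count e := by
  match L with
  | [] => simp [List.getD_nil] at h0; exact absurd h0.symm he
  | [a] => simp [List.getD] at h1; exact absurd h1.symm he
  | a :: c :: t =>
    simp [List.getD_cons_zero] at h0
    simp [List.getD_cons_succ, List.getD_cons_zero] at h1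
    subst h0; subst h1
    simp [List.count_cons]

lemma le_getD_head {L : List ℕ} (hs : L.Pairwise (· ≥ ·)) {x : ℕ} (hx : x ∈ L) :
    x ≤ L.getD 0 0 := by
  cases L with
  | nil => simp at hx
  | cons a t =>
    rcases List.mem_cons.1 hx with rfl | hx
    · simp [List.getD_cons_zero]
    · simpa [List.getD_cons_zero] using (List.pairwise_cons.1 hs).1 x hx

lemma one_le_count_of_mem {L : List ℕ} {x : ℕ} (h : x ∈ L) : 1 ≤ L.count x :=
  List.count_pos_iff.2 h

lemma mem_of_zs {β : List ℕ} {l i x : ℕ} {ob : Option ℕ} (h : x ∈ zs ob l i β) : x ∈ β :=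
  (zs_sublist β ob l i).mem h

lemma stage3 (β : List ℕ) (bk : Option ℕ) (l i d e : ℕ)
    (hde : e + 2 = d)
    (hs : β.Pairwise (· ≥ ·))
    (hp : ∀ x ∈ β, x ≠ 1 → 2 ∣ x ∧ β.count x ≤ 2)
    (hd2 : 2 ∣ d) (hd4 : 4 ≤ d)
    (hnd : d ∉ β)
    (hce : β.count e ≤ 2)
    (hub : ∀ x ∈ β, x ≤ d)
    (hbk : ∀ v, bk = some v → d + 1 ≤ v)
    (hZ1 : (zs bk l i β).getD 0 0 = e)
    (hZ2 : (zs bk l i β).getD 1 0 = e) : False := by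
  have he0 : e ≠ 0 := by omega
  cases β with
  | nil => simp [zs, List.getD_nil] at hZ1; omega
  | cons b rest =>
    have hsr : rest.Pairwise (· ≥ ·) := (List.pairwise_cons.1 hs).2
    by_cases hC : fCond bk l i b rest = true
    · rw [zs_cons, if_pos hC] at hZ1 hZ2
      simp only [List.getD_cons_zero, List.getD_cons_succ] at hZ1 hZ2
      have heM : e ∈ rest := mem_of_zs (getD_mem hZ2 he0)
      have hb1 : e ≤ rest.getD 0 0 := le_getD_head hsr heM
      rcases fCond_elim hC with ⟨v, hv, hvle⟩ | ⟨_, h2⟩ | ⟨_, h3a, _, h3c⟩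
      · have := hbk v hv; omega
      · omega
      · omega
    · rw [zs_cons, if_neg hC] at hZ1 hZ2
      have hcnt : 2 ≤ (zs (some b) (l+1) i rest).count e := two_le_count hZ1 hZ2 he0
      have hcr : 2 ≤ rest.count e :=
        le_trans hcnt ((zs_sublist rest (some b) (l+1) i).count_le e)
      have heM : e ∈ rest := by
        by_contra h
        simp [List.count_eq_zero_of_not_mem h] at hcr
      have hbe : e ≤ b := (List.pairwise_cons.1 hs).1 e heM
      have hbd : b ≤ d := hub b ((List.mem_cons_self : b ∈ b :: rest))
      have hbne : b ≠ d := fun h => hnd (h ▸ (List.mem_cons_self : b ∈ b :: rest))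
      rcases (by omega : b = e ∨ b = e + 1) with hb | hb
      · have hcc : (b :: rest).count e = rest.count e + 1 := by
          rw [hb]; exact List.count_cons_self
        omega
      · have h1 : b ≠ 1 := by omega
        have := (hp b ((List.mem_cons_self : b ∈ b :: rest)) h1).1
        omega

lemma stage2 (β : List ℕ) : ∀ (bk : Option ℕ) (l i d e : ℕ),
    e + 2 = d → β.Pairwise (· ≥ ·) →
    (∀ x ∈ β, x ≠ 1 → 2 ∣ x ∧ β.count x ≤ 2) →
    i % 2 = 0 → 2 ∣ d → 4 ≤ d →
    β.count d ≤ 1 → (∀ v, bk = some v → d + 1 ≤ v) →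
    (zs bk l i β).getD 0 0 = d → (zs bk l i β).getD 1 0 = e →
    (zs bk l i β).getD 2 0 = e → False := by
  induction β with
  | nil =>
    intro bk l i d e hde hs hp hi hd2 hd4 hcd hbk hZ1 hZ2 hZ3
    simp [zs, List.getD_nil] at hZ1; omega
  | cons b rest ih =>
    intro bk l i d e hde hs hp hi hd2 hd4 hcd hbk hZ1 hZ2 hZ3
    have hsr : rest.Pairwise (· ≥ ·) := (List.pairwise_cons.1 hs).2
    have hp' : ∀ x ∈ rest, x ≠ 1 → 2 ∣ x ∧ rest.count x ≤ 2 := by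
      intro x hx h1
      refine ⟨(hp x (List.mem_cons_of_mem b hx) h1).1,
        le_trans ?_ (hp x (List.mem_cons_of_mem b hx) h1).2⟩
      exact (List.sublist_cons_self b rest).count_le x
    by_cases hC : fCond bk l i b rest = true
    · rw [zs_cons, if_pos hC] at hZ1 hZ2 hZ3
      simp only [List.getD_cons_zero, List.getD_cons_succ] at hZ1 hZ2 hZ3
      have he0 : e ≠ 0 := by omega
      have heM : e ∈ rest := mem_of_zs (getD_mem hZ2 he0)
      have hnd : d ∉ rest := by
        intro h
        have h1' := one_le_count_of_mem h
        have h2' : (b :: rest).count d = rest.count d + 1 := by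
          rw [hZ1]; exact List.count_cons_self
        omega
      have hce : rest.count e ≤ 2 := by
        have h1 : e ≠ 1 := by omega
        have hA := (hp e (List.mem_cons_of_mem b heM) h1).2
        have hB : (b :: rest).count e = rest.count e :=
          List.count_cons_of_ne (by omega)
        omega
      exact stage3 rest bk l (i+1) d e hde hsr hp' hd2 hd4 hnd hce
        (fun x hx => hZ1 ▸ (List.pairwise_cons.1 hs).1 x hx) hbk hZ2 hZ3
    · rw [zs_cons, if_neg hC] at hZ1 hZ2 hZ3
      have hd0 : d ≠ 0 := by omega
      have hdM : d ∈ rest := mem_of_zs (getD_mem hZ1 hd0)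
      have hbd : d ≤ b := (List.pairwise_cons.1 hs).1 d hdM
      have hbne : b ≠ d := by
        rintro rfl
        have h1' := one_le_count_of_mem hdM
        have h2' : (b :: rest).count b = rest.count b + 1 := (List.count_cons_self : (b :: rest).count b = rest.count b + 1)
        omega
      have hcd' : rest.count d ≤ 1 := by
        have : (b :: rest).count d = rest.count d :=
          List.count_cons_of_ne (by omega)
        omega
      exact ih (some b) (l+1) i d e hde hsr hp' hi hd2 hd4 hcd'
        (fun v hv => by injection hv with h; omega) hZ1 hZ2 hZ3

lemma stageA (β : List ℕ) : ∀ (bk : Option ℕ) (l i : ℕ),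
    β.Pairwise (· ≥ ·) →
    (∀ x ∈ β, x ≠ 1 → 2 ∣ x ∧ β.count x ≤ 2) →
    β.count 1 ≤ 1 →
    (∀ v, bk = some v → (∀ x ∈ β, x ≤ v) ∧ (v ≠ 1 → 2 ∣ v ∧ β.count v ≤ 1)) →
    ∀ j, 0 < j → (i + j) % 2 = 0 →
    ¬((zs bk l i β).getD (j-1) 0 = (zs bk l i β).getD j 0 ∧
      (zs bk l i β).getD j 0 = (zs bk l i β).getD (j+1) 0 + 2 ∧
      (zs bk l i β).getD (j+1) 0 = (zs bk l i β).getD (j+2) 0 ∧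
      (zs bk l i β).getD (j+1) 0 ≠ 0) := by
  induction β with
  | nil =>
    intro bk l i hs hp h1 hbk j hj hpar ⟨q1, q2, q3, q4⟩
    simp [zs, List.getD_nil] at q4
  | cons b rest ih =>
    intro bk l i hs hp h1 hbk j hj hpar ⟨q1, q2, q3, q4⟩
    have hsr : rest.Pairwise (· ≥ ·) := (List.pairwise_cons.1 hs).2
    have hp' : ∀ x ∈ rest, x ≠ 1 → 2 ∣ x ∧ rest.count x ≤ 2 := by
      intro x hx hx1
      refine ⟨(hp x (List.mem_cons_of_mem b hx) hx1).1,
        le_trans ?_ (hp x (List.mem_cons_of_mem b hx) hx1).2⟩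
      exact (List.sublist_cons_self b rest).count_le x
    have h1' : rest.count 1 ≤ 1 :=
      le_trans ((List.sublist_cons_self b rest).count_le 1) h1
    by_cases hC : fCond bk l i b rest = true
    · rw [zs_cons, if_pos hC] at q1 q2 q3 q4
      rcases (by omega : j = 1 ∨ 2 ≤ j) with rfl | hj2
      · -- the crucial case
        have q1' : b = (zs bk l (i+1) rest).getD 0 0 := q1
        have q2' : (zs bk l (i+1) rest).getD 0 0 = (zs bk l (i+1) rest).getD 1 0 + 2 := q2
        have q3' : (zs bk l (i+1) rest).getD 1 0 = (zs bk l (i+1) rest).getD 2 0 := q3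
        have q4' : (zs bk l (i+1) rest).getD 1 0 ≠ 0 := q4
        have hdM : b ∈ rest := mem_of_zs (getD_mem q1'.symm (by omega))
        have hcb2 : (b :: rest).count b = rest.count b + 1 := (List.count_cons_self : (b :: rest).count b = rest.count b + 1)
        have hcbM : 1 ≤ rest.count b := one_le_count_of_mem hdM
        have hb1 : b ≠ 1 := by intro h; subst h; omega
        have hb2 : 2 ∣ b := (hp b ((List.mem_cons_self : b ∈ b :: rest)) hb1).1
        have hb4 : 4 ≤ b := by omega
        have hrb : b ≤ rest.getD 0 0 := le_getD_head hsr hdM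
        rcases fCond_elim hC with ⟨v, hv, hvle⟩ | ⟨_, h2⟩ | ⟨_, h3a, _, h3c⟩
        · -- c1 : bk = some v, v ≤ b + 2
          obtain ⟨hub, hv2⟩ := hbk v hv
          have hvb : b ≤ v := hub b ((List.mem_cons_self : b ∈ b :: rest))
          have hv1 : v ≠ 1 := by omega
          obtain ⟨hv2d, hvcnt⟩ := hv2 hv1
          rcases (by omega : v = b ∨ v = b + 2) with rfl | rfl
          · -- v = b : too many copies of b
            omega
          · -- v = b + 2 : proceed to stage 2
            exact stage2 rest bk l (i+1) b ((zs bk l (i+1) rest).getD 1 0)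
              (by omega) hsr hp' (by omega) hb2 hb4
              (by
                have := (hp b ((List.mem_cons_self : b ∈ b :: rest)) hb1).2
                omega)
              (fun v' hv' => by rw [hv] at hv'; injection hv' with h; omega)
              q1'.symm rfl q3'.symm
        · omega
        · omega
      · -- j ≥ 2 : pass to the tail
        obtain ⟨k, rfl⟩ : ∃ k, j = k + 2 := ⟨j - 2, by omega⟩
        have e1 : k + 2 - 1 = k + 1 := by omega
        rw [e1] at q1
        simp only [List.getD_cons_succ] at q1 q2 q3 q4
        have hbk' : ∀ v, bk = some v →
            (∀ x ∈ rest, x ≤ v) ∧ (v ≠ 1 → 2 ∣ v ∧ rest.count v ≤ 1) := by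
          intro v hv
          obtain ⟨ha, hbq⟩ := hbk v hv
          exact ⟨fun x hx => ha x (List.mem_cons_of_mem b hx),
            fun hv1 => ⟨(hbq hv1).1,
              le_trans ((List.sublist_cons_self b rest).count_le v) (hbq hv1).2⟩⟩
        exact ih bk l (i+1) hsr hp' h1' hbk' (k+1) (by omega) (by omega)
          ⟨by simpa using q1, q2, q3, q4⟩
    · rw [zs_cons, if_neg hC] at q1 q2 q3 q4
      have hbk' : ∀ v, some b = some v →
          (∀ x ∈ rest, x ≤ v) ∧ (v ≠ 1 → 2 ∣ v ∧ rest.count v ≤ 1) := by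
        intro v hv
        obtain rfl : b = v := by injection hv
        refine ⟨fun x hx => (List.pairwise_cons.1 hs).1 x hx,
          fun hv1 => ⟨(hp b ((List.mem_cons_self : b ∈ b :: rest)) hv1).1, ?_⟩⟩
        have h1'' := (hp b ((List.mem_cons_self : b ∈ b :: rest)) hv1).2
        have h2'' := (List.count_cons_self : (b :: rest).count b = rest.count b + 1)
        omega
      exact ih (some b) (l+1) i hsr hp' h1' hbk' j hj hpar ⟨q1, q2, q3, q4⟩

lemma delta_eq (β : List ℕ) : delta β = zs none 0 0 β := zsel β none 0 0

/-- `δ` contains no bad sequence. -/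
theorem stmt6 (β : List ℕ) (hβ : GoodBeta β) :
    ¬ BadSeq (delta β) := by
  rintro ⟨i, hi0, hi2, q1, q2, q3, q4⟩
  obtain ⟨⟨hs, hpos⟩, h1, hp, _⟩ := hβ
  rw [delta_eq] at q1 q2 q3 q4
  unfold part at q1 q2 q3 q4
  have e1 : i + 1 - 1 = i := by omega
  have e2 : i + 2 - 1 = i + 1 := by omega
  have e3 : i + 3 - 1 = i + 2 := by omega
  rw [e1] at q1 q2
  rw [e2] at q2 q3 q4
  rw [e3] at q3
  exact stageA β none 0 0 hs hp h1 (fun v hv => by simp at hv) i hi0 (by omega)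
    ⟨q1, q2, q3, q4⟩


end Duckworth
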